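/- The map f on labeled rooted plane trees (root labeled 0, leftmost root-child labeled 1) defined by: the (j+1)-th child of 0 in T becomes the j-th child of 1 in f(T), the j-th child of 1 in T becomes the (j+1)-th child of 0 in f(T), and all other parent-child relations are unchanged, is a well-defined involution on L_n, and T ∈ L'_n if and only if f(T) ∉ L'_n. -/
import Mathlib


/-- A labeled rooted plane tree: a root label together with a linearly ordered list of
subtrees. -/
inductive PTree : Type where
  | node : ℕ → List PTree → PTree

/-- The label of the root of the tree. -/
def PTree.label : PTree → ℕ
  | .node a _ => a

/-- The ordered list of children of the root. -/
def PTree.children : PTree → List PTree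
  | .node _ ts => ts

mutual
/-- The list of all labels occurring in the tree. -/
def PTree.labels : PTree → List ℕ
  | .node a ts => a :: labelsList ts
/-- The list of all labels occurring in a forest. -/
def labelsList : List PTree → List ℕ
  | [] => []
  | t :: ts => t.labels ++ labelsList ts
end

/-- `T` is a member of `Lₙ`: a labeled rooted plane tree with `n+1` vertices labeled
bijectively by `{0,…,n}`, whose root is labeled `0` and whose leftmost root-child is
labeled `1`. -/
def InL (n : ℕ) (T : PTree) : Prop :=
  T.labels.Nodup ∧ (∀ k : ℕ, k ∈ T.labels ↔ k ≤ n) ∧ T.label = 0 ∧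
    ∃ t ts, T = .node 0 (t :: ts) ∧ t.label = 1

/-- `T` is a member of `L'ₙ ⊆ Lₙ`: additionally, the vertex labeled `2` lies in the
subtree rooted at the vertex labeled `1` (the leftmost child of the root). -/
def InL' (n : ℕ) (T : PTree) : Prop :=
  InL n T ∧ ∃ t ts, T = .node 0 (t :: ts) ∧ 2 ∈ t.labels

/-- The map `f`: the `(j+1)`-th child of the root `0` becomes the `j`-th child of the
leftmost root-child `1`, the `j`-th child of `1` becomes the `(j+1)`-th child of `0`,
and everything else is unchanged. -/
def fswap : PTree → PTree
  | .node a (.node b cs :: rest) => .node a (.node b rest :: cs)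
  | t => t

lemma labels_node (a : ℕ) (ts : List PTree) :
    (PTree.node a ts).labels = a :: labelsList ts := rfl

lemma labelsList_cons (t : PTree) (ts : List PTree) :
    labelsList (t :: ts) = t.labels ++ labelsList ts := rfl

/-- `f` is a well-defined involution on `Lₙ` exchanging `L'ₙ` with its complement. -/
theorem fswap_involution (n : ℕ) (hn : 2 ≤ n) (T : PTree) (hT : InL n T) :
    InL n (fswap T) ∧ fswap (fswap T) = T ∧ (InL' n T ↔ ¬ InL' n (fswap T)) := by
  obtain ⟨hnd, hmem, hlab, t, ts, rfl, ht⟩ := hT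
  obtain ⟨b, cs⟩ := t
  have hb : b = 1 := ht
  subst hb
  have hfs : fswap (PTree.node 0 (PTree.node 1 cs :: ts)) =
      PTree.node 0 (PTree.node 1 ts :: cs) := rfl
  have hperm : (PTree.node 0 (PTree.node 1 ts :: cs)).labels.Perm
      (PTree.node 0 (PTree.node 1 cs :: ts)).labels := by
    simp only [labels_node, labelsList_cons, List.cons_append]
    exact ((List.perm_append_comm).cons 1).cons 0
  have hnd' : (PTree.node 0 (PTree.node 1 ts :: cs)).labels.Nodup :=
    hperm.nodup_iff.mpr hnd
  have hmem' : ∀ k : ℕ, k ∈ (PTree.node 0 (PTree.node 1 ts :: cs)).labels ↔ k ≤ n := by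
    intro k; rw [hperm.mem_iff]; exact hmem k
  have h2 : (2 : ℕ) ∈ (PTree.node 0 (PTree.node 1 cs :: ts)).labels := (hmem 2).mpr hn
  -- decompose membership of 2
  have h2' : 2 ∈ labelsList cs ∨ 2 ∈ labelsList ts := by
    simp only [labels_node, labelsList_cons, List.mem_cons, List.mem_append] at h2
    rcases h2 with h | (h | h) | h
    · omega
    · omega
    · exact Or.inl h
    · exact Or.inr h
  have hnotboth : ¬ (2 ∈ labelsList cs ∧ 2 ∈ labelsList ts) := by
    rintro ⟨h1, h2⟩
    simp only [labels_node, labelsList_cons, List.cons_append, List.nodup_cons,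
      List.mem_cons, List.mem_append] at hnd
    exact (List.disjoint_of_nodup_append hnd.2.2) h1 h2
  refine ⟨⟨hnd', hmem', rfl, PTree.node 1 ts, cs, rfl, rfl⟩, rfl, ?_⟩
  constructor
  · rintro ⟨_, t', ts', heq, h2t⟩ ⟨_, t'', ts'', heq', h2t'⟩
    rw [hfs] at heq'
    cases heq; cases heq'
    simp only [labels_node, List.mem_cons] at h2t h2t'
    rcases h2t with h | h
    · omega
    rcases h2t' with h' | h'
    · omega
    exact hnotboth ⟨h, h'⟩
  · intro hnot
    refine ⟨⟨hnd, hmem, rfl, PTree.node 1 cs, ts, rfl, rfl⟩, PTree.node 1 cs, ts, rfl, ?_⟩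
    rcases h2' with h | h
    · exact List.mem_cons_of_mem _ h
    · exfalso
      exact hnot ⟨⟨hnd', hmem', rfl, PTree.node 1 ts, cs, rfl, rfl⟩,
        PTree.node 1 ts, cs, rfl, List.mem_cons_of_mem _ h⟩
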